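/- arXiv:2205.15583 — 9 statements merged into one kernel-verified Lean document; each statement's English description precedes it below -/
import Mathlib

section
/- Let R be a commutative ring, S ⊆ R a multiplicative subset, and M an S-finite R-module. Then M is S-Noetherian if and only if for every prime ideal p of R with Ann(M) ⊆ p, there exists an S-finite submodule N of M such that p•M ⊆ N ⊆ M(p), where M(p) = {x ∈ M | s•x ∈ p•M for some s ∈ R \ p}. -/
open Pointwise

variable {R M : Type*} [CommRing R] [AddCommGroup M] [Module R M]

/-- A submodule `N` of `M` is `S`-finite if there exist `s ∈ S` and a finitely
generated submodule `F ⊆ N` with `s • N ⊆ F`. -/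
def IsSFinite (S : Submonoid R) (N : Submodule R M) : Prop :=
  ∃ s ∈ S, ∃ F : Submodule R M, F.FG ∧ F ≤ N ∧ ∀ x ∈ N, s • x ∈ F

/-- Master absorption lemma: if `P ⊔ C` is `S`-finite and elements of `P ⊓ C` are
`S`-absorbed into a f.g. submodule of `P`, then `P` is `S`-finite. -/
lemma master_lemma (S : Submonoid R) (P C : Submodule R M)
    (h1 : IsSFinite S (P ⊔ C)) (s₃ : R) (hs₃ : s₃ ∈ S)
    (F₃ : Submodule R M) (hF₃ : F₃.FG) (hF₃P : F₃ ≤ P)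
    (h2 : ∀ x ∈ P, x ∈ C → s₃ • x ∈ F₃) : IsSFinite S P := by
  obtain ⟨s₂, hs₂, F₂, hF₂fg, hF₂le, hmem⟩ := h1
  obtain ⟨T, hT⟩ := hF₂fg
  have hdec : ∀ f : T, ∃ q ∈ P, ∃ c ∈ C, (f : M) = q + c := by
    intro f
    have hf : (f : M) ∈ P ⊔ C := hF₂le (hT ▸ Submodule.subset_span f.2)
    rw [Submodule.mem_sup] at hf
    obtain ⟨q, hq, c, hc, h⟩ := hf
    exact ⟨q, hq, c, hc, h.symm⟩
  choose q hq c hc hqc using hdec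
  set Q : Submodule R M := Submodule.span R (Set.range q) with hQdef
  set C' : Submodule R M := Submodule.span R (Set.range c) with hC'def
  have hQP : Q ≤ P := Submodule.span_le.2 (by rintro _ ⟨f, rfl⟩; exact hq f)
  have hC'C : C' ≤ C := Submodule.span_le.2 (by rintro _ ⟨f, rfl⟩; exact hc f)
  have hF₂QC : F₂ ≤ Q ⊔ C' := by
    rw [← hT, Submodule.span_le]
    intro f hf
    rw [show f = q ⟨f, hf⟩ + c ⟨f, hf⟩ from hqc ⟨f, hf⟩]
    exact Submodule.add_mem_sup (Submodule.subset_span ⟨_, rfl⟩)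
      (Submodule.subset_span ⟨_, rfl⟩)
  refine ⟨s₃ * s₂, S.mul_mem hs₃ hs₂, Q ⊔ F₃, ?_, sup_le hQP hF₃P, ?_⟩
  · refine Submodule.FG.sup ⟨(Set.finite_range q).toFinset, ?_⟩ hF₃
    rw [Set.Finite.coe_toFinset]
  · intro x hx
    have h1 : s₂ • x ∈ Q ⊔ C' := hF₂QC (hmem x (Submodule.mem_sup_left hx))
    rw [Submodule.mem_sup] at h1
    obtain ⟨y, hy, z, hz, hyz⟩ := h1
    have hzeq : z = s₂ • x - y := by rw [← hyz]; abel
    have hzP : z ∈ P := hzeq ▸ sub_mem (P.smul_mem s₂ hx) (hQP hy)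
    have hs₃z : s₃ • z ∈ F₃ := h2 z hzP (hC'C hz)
    have : (s₃ * s₂) • x = s₃ • y + s₃ • z := by
      rw [mul_smul, ← hyz, smul_add]
    rw [this]
    exact Submodule.add_mem_sup (Q.smul_mem s₃ hy) hs₃z

/-- If there is `u` with `u • M ⊄ P` but `(P :ₘ u) ⊋ P`, and `P` is a maximal
non-`S`-finite submodule candidate, then `P` is `S`-finite. -/
lemma colon_trick (S : Submonoid R) (P : Submodule R M)
    (hmax : ∀ L, P < L → IsSFinite S L)
    (u : R) (m : M) (hm : u • m ∉ P)
    (w : M) (hw : w ∉ P) (huw : u • w ∈ P) : IsSFinite S P := by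
  set f : M →ₗ[R] M := LinearMap.lsmul R M u with hf
  have hfapp : ∀ x : M, f x = u • x := fun x => rfl
  set Qu : Submodule R M := P.comap f with hQu
  have hPQu : P ≤ Qu := fun x hx => by
    simp only [hQu, Submodule.mem_comap, hfapp]; exact P.smul_mem u hx
  have hQulr : P < Qu := lt_of_le_of_ne hPQu (by
    intro h
    have : w ∈ Qu := by simp only [hQu, Submodule.mem_comap, hfapp]; exact huw
    rw [← h] at this; exact hw this)
  obtain ⟨s₃, hs₃, F₃', hF₃'fg, hF₃'le, hmem₃⟩ := hmax Qu hQulr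
  set C : Submodule R M := Submodule.map f ⊤ with hC
  have hPC : P < P ⊔ C := by
    refine lt_of_le_of_ne le_sup_left (fun hEq => hm ?_)
    have hmc : u • m ∈ P ⊔ C := Submodule.mem_sup_right ⟨m, trivial, rfl⟩
    rwa [← hEq] at hmc
  refine master_lemma S P C (hmax _ hPC) s₃ hs₃ (Submodule.map f F₃') (hF₃'fg.map f) ?_ ?_
  · rintro _ ⟨y, hy, rfl⟩
    exact hF₃'le hy
  · rintro x hxP ⟨y, -, rfl⟩
    have hyQu : y ∈ Qu := hxP
    have : s₃ • y ∈ F₃' := hmem₃ y hyQu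
    refine ⟨s₃ • y, this, ?_⟩
    simp only [hfapp]
    rw [smul_comm]

theorem cohen_for_S_noetherian (S : Submonoid R)
    (hM : IsSFinite S (⊤ : Submodule R M)) :
    (∀ N : Submodule R M, IsSFinite S N) ↔
      ∀ p : Ideal R, p.IsPrime → Module.annihilator R M ≤ p →
        ∃ N : Submodule R M, IsSFinite S N ∧ p • (⊤ : Submodule R M) ≤ N ∧
          ∀ x ∈ N, ∃ s ∉ p, s • x ∈ p • (⊤ : Submodule R M) := by
  constructor
  · intro h p hp _
    refine ⟨p • ⊤, h _, le_rfl, fun x hx => ⟨1, fun h1 => hp.ne_top (Ideal.eq_top_iff_one p |>.2 h1), ?_⟩⟩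
    rw [one_smul]; exact hx
  · intro h
    by_contra hcon
    push_neg at hcon
    obtain ⟨P₀, hP₀⟩ := hcon
    -- Zorn's lemma: get a maximal non-S-finite submodule P
    obtain ⟨P, -, hPmem, hPmax⟩ := zorn_le_nonempty₀ {N : Submodule R M | ¬ IsSFinite S N}
      (fun c hc hchain y hy => by
        refine ⟨sSup c, ?_, fun z hz => le_sSup hz⟩
        rintro ⟨s, hs, F, hFfg, hFle, hmem⟩
        obtain ⟨N₀, hN₀c, hFN₀⟩ :=
          (CompleteLattice.isCompactElement_iff_le_of_directed_sSup_le (Submodule R M) F).1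
            ((Submodule.fg_iff_compact F).1 hFfg) c ⟨y, hy⟩ hchain.directedOn hFle
        exact hc hN₀c ⟨s, hs, F, hFfg, hFN₀, fun x hx => hmem x (le_sSup hN₀c hx)⟩)
      P₀ hP₀
    have hP : ¬ IsSFinite S P := hPmem
    have hmax : ∀ L, P < L → IsSFinite S L := by
      intro L hL
      by_contra h'
      exact hL.ne (le_antisymm hL.le (hPmax h' hL.le))
    -- the colon ideal p = (P : M)
    set p : Ideal R := P.colon ⊤ with hpdef
    have hmemp : ∀ r : R, r ∈ p ↔ ∀ m : M, r • m ∈ P := by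
      intro r
      rw [hpdef, Submodule.mem_colon]
      exact ⟨fun h m => h m trivial, fun h m _ => h m⟩
    have hnotp : ∀ r : R, r ∉ p ↔ ∃ m : M, r • m ∉ P := by
      intro r; rw [hmemp]; push_neg; rfl
    have hpP : p • (⊤ : Submodule R M) ≤ P :=
      Submodule.smul_le.2 fun r hr n _ => (hmemp r).1 hr n
    have hPtop : P ≠ ⊤ := fun h => hP (h ▸ hM)
    have hprime : p.IsPrime := by
      constructor
      · intro h
        refine hPtop (Submodule.eq_top_iff'.2 fun x => ?_)
        have : (1 : R) ∈ p := h ▸ Submodule.mem_top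
        simpa using (hmemp 1).1 this x
      · intro a b hab
        by_contra hcon2
        push_neg at hcon2
        obtain ⟨ha, hb⟩ := hcon2
        obtain ⟨m, hm⟩ := (hnotp a).1 ha
        obtain ⟨m', hm'⟩ := (hnotp b).1 hb
        refine hP (colon_trick S P hmax a m hm (b • m') hm' ?_)
        rw [smul_smul]
        exact (hmemp (a * b)).1 hab m'
    have hann : Module.annihilator R M ≤ p := by
      intro r hr
      rw [hmemp]
      intro m
      rw [Module.mem_annihilator.1 hr m]
      exact P.zero_mem
    obtain ⟨N, ⟨s₁, hs₁, F₁, hF₁fg, hF₁N, hs₁N⟩, hpN, hNMp⟩ := h p hprime hann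
    by_cases hA : ∃ u : R, (∃ m, u • m ∉ P) ∧ ∃ w, w ∉ P ∧ u • w ∈ P
    · obtain ⟨u, ⟨m, hm⟩, w, hw, huw⟩ := hA
      exact hP (colon_trick S P hmax u m hm w hw huw)
    · push_neg at hA
      have key : ∀ u : R, u ∉ p → ∀ w : M, u • w ∈ P → w ∈ P := by
        intro u hu w huw
        by_contra hw
        exact hA u ((hnotp u).1 hu) w hw huw
      have hNP : N ≤ P := by
        intro x hx
        obtain ⟨u, hu, hux⟩ := hNMp x hx
        exact key u hu x (hpP hux)
      obtain ⟨z, hz⟩ : ∃ z : M, z ∉ P := by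
        by_contra hzz
        push_neg at hzz
        exact hPtop (Submodule.eq_top_iff'.2 hzz)
      have hz_colon : ∀ r : R, r • z ∈ P → r ∈ p := by
        intro r hrz
        by_contra hr
        exact hz (key r hr z hrz)
      refine hP (master_lemma S P (Submodule.span R {z}) (hmax _ ?_) s₁ hs₁ F₁ hF₁fg
        (hF₁N.trans hNP) ?_)
      · refine lt_of_le_of_ne le_sup_left (fun hEq => hz ?_)
        exact hEq ▸ Submodule.mem_sup_right (Submodule.mem_span_singleton_self z)
      · intro x hxP hxz
        obtain ⟨r, rfl⟩ := Submodule.mem_span_singleton.1 hxz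
        have hrp : r ∈ p := hz_colon r hxP
        have : r • z ∈ p • (⊤ : Submodule R M) :=
          Submodule.smul_mem_smul hrp Submodule.mem_top
        exact hs₁N _ (hpN this)
end

section
/- Let R be a commutative ring, S a multiplicative subset of R, and M an R-module. If {N_i}_{i∈Λ} is a nonempty chain (totally ordered family under inclusion) of submodules of M, none of which is S-finite, then the union N = ⋃_{i∈Λ} N_i is a submodule of M that is not S-finite. -/
open Pointwise

variable {R M : Type*} [CommRing R] [AddCommGroup M] [Module R M]

theorem union_chain_not_S_finite (S : Submonoid R) (c : Set (Submodule R M))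
    (hne : c.Nonempty) (hc : IsChain (· ≤ ·) c)
    (h : ∀ N ∈ c, ¬ IsSFinite S N) :
    (((sSup c : Submodule R M) : Set M) = ⋃ N ∈ c, (N : Set M)) ∧
      ¬ IsSFinite S (sSup c) := by
  have hdir : DirectedOn (· ≤ ·) c := hc.directedOn
  constructor
  · ext x
    simp [Submodule.mem_sSup_of_directed hne hdir]
  · rintro ⟨s, hs, F, ⟨t, ht⟩, hFle, hsmul⟩
    -- every generator of F lies in some member of the chain
    have hgen : ∀ x : M, x ∈ (t : Set M) → ∃ N ∈ c, x ∈ N := by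
      intro x hx
      have : x ∈ sSup c := hFle (ht ▸ Submodule.subset_span hx)
      exact (Submodule.mem_sSup_of_directed hne hdir).mp this
    -- find a single member of the chain containing all generators
    have : ∃ N ∈ c, (t : Set M) ⊆ N := by
      classical
      obtain ⟨N, hNc, hN⟩ := hdir.exists_mem_subset_of_finset_subset_biUnion hne
        (fun x hx => by
          obtain ⟨N, hNc, hxN⟩ := hgen x hx
          exact Set.mem_biUnion hNc hxN)
      exact ⟨N, hNc, hN⟩
    obtain ⟨N, hNc, htN⟩ := this
    have hFN : F ≤ N := ht ▸ Submodule.span_le.mpr htN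
    exact h N hNc ⟨s, hs, F, ⟨t, ht⟩, hFN,
      fun x hxN => hsmul x (le_sSup hNc hxN)⟩
end

section
/- Let R be a commutative ring, S a multiplicative subset, M an R-module, and N a submodule maximal among submodules of M that are not S-finite. Let p = (N : M). Then M(p) ⊆ N, where M(p) = {x ∈ M | ∃ s ∈ R \ p, s•x ∈ p•M}. -/
open Pointwise

variable {R M : Type*} [CommRing R] [AddCommGroup M] [Module R M]

/-- A finite set contained in `P ⊔ Q` lies in `A ⊔ Q` for some f.g. `A ≤ P`. -/
lemma exists_fg_le_of_finset_subset_sup (P Q : Submodule R M) (T : Finset M)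
    (hT : ∀ g ∈ T, g ∈ P ⊔ Q) :
    ∃ A : Submodule R M, A.FG ∧ A ≤ P ∧ ∀ g ∈ T, g ∈ A ⊔ Q := by
  classical
  induction T using Finset.induction with
  | empty => exact ⟨⊥, Submodule.fg_bot, bot_le, by simp⟩
  | @insert g T hg ih =>
    obtain ⟨A, hAfg, hAP, hA⟩ := ih fun x hx => hT x (Finset.mem_insert_of_mem hx)
    obtain ⟨p, hp, q, hq, hpq⟩ := Submodule.mem_sup.mp (hT g (Finset.mem_insert_self g T))
    refine ⟨A ⊔ Submodule.span R {p}, hAfg.sup (Submodule.fg_span_singleton p),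
      sup_le hAP ((Submodule.span_singleton_le_iff_mem p P).mpr hp), ?_⟩
    intro x hx
    rcases Finset.mem_insert.mp hx with rfl | hx
    · rw [← hpq]
      exact Submodule.add_mem_sup
        (Submodule.mem_sup_right (Submodule.mem_span_singleton_self p)) hq
    · exact SetLike.le_def.mp (sup_le_sup_right le_sup_left _) (hA x hx)

theorem Mp_subset_of_maximal_non_S_finite (S : Submonoid R)
    (N : Submodule R M) (hN : ¬ IsSFinite S N)
    (hmax : ∀ P : Submodule R M, N < P → IsSFinite S P) :
    ∀ x : M, (∃ s ∉ N.colon ⊤, s • x ∈ (N.colon ⊤) • (⊤ : Submodule R M)) →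
      x ∈ N := by
  rintro x ⟨s, hs, hsx⟩
  -- `p • ⊤ ≤ N`, hence `s • x ∈ N`
  have hpM : (N.colon ⊤) • (⊤ : Submodule R M) ≤ N := by
    refine Submodule.smul_le.mpr fun r hr m _ => ?_
    exact Submodule.mem_colon.mp hr m trivial
  have hsxN : s • x ∈ N := hpM hsx
  by_contra hx
  -- `N₁ = (N : s)`
  set N1 : Submodule R M := N.comap (DistribMulAction.toLinearMap R M s) with hN1
  have hN1mem : ∀ y : M, y ∈ N1 ↔ s • y ∈ N := fun y => Iff.rfl
  have hNN1 : N < N1 := by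
    refine lt_of_le_of_ne (fun y hy => (hN1mem y).mpr (N.smul_mem s hy)) ?_
    intro h
    exact hx (h ▸ (hN1mem x).mpr hsxN)
  obtain ⟨t, htS, F, hFfg, hFle, hF⟩ := hmax N1 hNN1
  -- `N₂ = N + sM`
  set N2 : Submodule R M := N ⊔ s • (⊤ : Submodule R M) with hN2
  have hNN2 : N < N2 := by
    refine lt_of_le_of_ne le_sup_left ?_
    intro h
    apply hs
    rw [Submodule.mem_colon]
    intro m _
    exact h ▸ Submodule.mem_sup_right (Submodule.smul_mem_pointwise_smul m s ⊤ trivial)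
  obtain ⟨u, huS, G, hGfg, hGle, hG⟩ := hmax N2 hNN2
  obtain ⟨T, hT⟩ := hGfg
  obtain ⟨A, hAfg, hAN, hA⟩ := exists_fg_le_of_finset_subset_sup N (s • ⊤) T
    (fun g hg => hGle (hT ▸ Submodule.subset_span hg))
  have hGA : G ≤ A ⊔ s • (⊤ : Submodule R M) := by
    rw [← hT]
    exact Submodule.span_le.mpr hA
  -- `N` is `S`-finite with element `t * u` and module `A ⊔ s • F` : contradiction
  apply hN
  refine ⟨t * u, mul_mem htS huS, A ⊔ s • F, hAfg.sup ?_, sup_le hAN ?_, ?_⟩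
  · exact hFfg.map (DistribMulAction.toLinearMap R M s)
  · rintro _ ⟨f, hf, rfl⟩
    exact hFle hf
  · intro y hy
    have huy : u • y ∈ G := hG y (le_sup_left (α := Submodule R M) hy)
    obtain ⟨a, ha, z, hz, hza⟩ := Submodule.mem_sup.mp (hGA huy)
    obtain ⟨m, _, rfl⟩ := hz
    have hmN1 : m ∈ N1 := by
      rw [hN1mem]
      have : s • m = u • y - a := by rw [← hza]; abel
      rw [this]
      exact N.sub_mem (N.smul_mem u hy) (hAN ha)
    have htm : t • m ∈ F := hF m hmN1
    have : (t * u) • y = t • a + s • (t • m) := by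
      simp only [mul_smul, ← hza, smul_add, DistribSMul.toLinearMap_apply,
        smul_comm t s m]
    rw [this]
    exact Submodule.add_mem_sup (Submodule.smul_mem A t ha)
      (Submodule.smul_mem_pointwise_smul _ s F htm)
end

section
/- Let R be a commutative ring, S a multiplicative subset, M an S-finite R-module, and N a submodule of M maximal among submodules that are not S-finite. Then the prime ideal p = (N : M) is disjoint from S. -/
open Pointwise

variable {R M : Type*} [CommRing R] [AddCommGroup M] [Module R M]

theorem colon_disjoint_of_maximal_non_S_finite (S : Submonoid R)
    (hM : IsSFinite S (⊤ : Submodule R M))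
    (N : Submodule R M) (hN : ¬ IsSFinite S N)
    (hmax : ∀ P : Submodule R M, N < P → IsSFinite S P) :
    ∀ s ∈ S, s ∉ N.colon ⊤ := by
  intro s hs hcol
  obtain ⟨t, ht, F, hFfg, -, hF⟩ := hM
  apply hN
  refine ⟨s * t, S.mul_mem hs ht, F.map (LinearMap.lsmul R M s), hFfg.map _, ?_, ?_⟩
  · rintro x ⟨f, -, rfl⟩
    exact Submodule.mem_colon.mp hcol f trivial
  · intro x _
    rw [mul_smul]
    exact ⟨t • x, hF x Submodule.mem_top, rfl⟩
end

section
/- Let R be a commutative ring and M a finitely generated R-module. Then M is Noetherian if and only if for every prime ideal p of R with Ann(M) ⊆ p, there exists a finitely generated submodule N of M such that p•M ⊆ N ⊆ M(p), where M(p) = {x ∈ M | s•x ∈ p•M for some s ∉ p}. -/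
open Pointwise

variable {R M : Type*} [CommRing R] [AddCommGroup M] [Module R M]

/-- If `N ⊔ P` is finitely generated, then there is a finitely generated `F ≤ N`
with `N ≤ F ⊔ (N ⊓ P)`. -/
lemma exists_fg_sup_decomp (N P : Submodule R M) (h : (N ⊔ P).FG) :
    ∃ F : Submodule R M, F.FG ∧ F ≤ N ∧ N ≤ F ⊔ (N ⊓ P) := by
  obtain ⟨T, hT⟩ := h
  have hmem : ∀ t : T, (t : M) ∈ N ⊔ P := fun t => hT ▸ Submodule.subset_span t.2
  choose n hn q hq hnq using fun t : T => Submodule.mem_sup.1 (hmem t)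
  refine ⟨Submodule.span R (Set.range n), Submodule.fg_span (Set.finite_range n),
    Submodule.span_le.2 (by rintro _ ⟨t, rfl⟩; exact hn t), ?_⟩
  have hsup : N ⊔ P ≤ Submodule.span R (Set.range n) ⊔ P := by
    rw [← hT, Submodule.span_le]
    intro t ht
    rw [show t = n ⟨t, ht⟩ + q ⟨t, ht⟩ from (hnq ⟨t, ht⟩).symm]
    exact Submodule.add_mem_sup (Submodule.subset_span ⟨⟨t, ht⟩, rfl⟩) (hq ⟨t, ht⟩)
  intro y hy
  obtain ⟨f, hf, z, hz, hfz⟩ := Submodule.mem_sup.1 (hsup (Submodule.mem_sup_left hy))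
  have hfN : f ∈ N := Submodule.span_le.2 (by rintro _ ⟨t, rfl⟩; exact hn t) hf
  have hzN : z ∈ N := by
    rw [eq_sub_of_add_eq' hfz]; exact sub_mem hy hfN
  exact Submodule.mem_sup.2 ⟨f, hf, z, ⟨hzN, hz⟩, hfz⟩

theorem parkash_kour_cohen (hM : Module.Finite R M) :
    IsNoetherian R M ↔
      ∀ p : Ideal R, p.IsPrime → Module.annihilator R M ≤ p →
        ∃ N : Submodule R M, N.FG ∧ p • (⊤ : Submodule R M) ≤ N ∧
          ∀ x ∈ N, ∃ s ∉ p, s • x ∈ p • (⊤ : Submodule R M) := by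
  constructor
  · intro hNoeth p hp _
    refine ⟨p • ⊤, IsNoetherian.noetherian _, le_rfl, fun x hx => ?_⟩
    exact ⟨1, (Ideal.ne_top_iff_one p).1 hp.ne_top, by simpa using hx⟩
  · intro hyp
    by_contra hnot
    -- there is a non-finitely generated submodule
    rw [isNoetherian_def] at hnot
    push_neg at hnot
    obtain ⟨N₀, hN₀⟩ := hnot
    -- Zorn: maximal non-f.g. submodule
    obtain ⟨N, -, hNmem, hNmax⟩ :=
      zorn_le_nonempty₀ {N : Submodule R M | ¬ N.FG} (fun c hc hchain y hy => by
        refine ⟨sSup c, ?_, fun z hz => le_sSup hz⟩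
        intro hfg
        have hcomp := (Submodule.fg_iff_compact _).1 hfg
        rw [CompleteLattice.isCompactElement_iff_le_of_directed_sSup_le] at hcomp
        obtain ⟨Z, hZc, hZ⟩ := hcomp c ⟨y, hy⟩ (hchain.directedOn) le_rfl
        exact hc hZc ((le_antisymm (le_sSup hZc) hZ : Z = sSup c) ▸ hfg)
        ) N₀ hN₀
    -- N is maximal among non-f.g. submodules
    have hNfg : ¬ N.FG := hNmem
    have hmax : ∀ Z : Submodule R M, N < Z → Z.FG := by
      intro Z hZ
      by_contra hZfg
      exact hZ.ne (le_antisymm hZ.le (hNmax hZfg hZ.le))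
    have htopfg : (⊤ : Submodule R M).FG := hM.fg_top
    have hNne : N ≠ ⊤ := fun h => hNfg (h ▸ htopfg)
    -- the ideal p = (N : M)
    set p : Ideal R := N.colon ⊤ with hpdef
    have hpM : p • (⊤ : Submodule R M) ≤ N := by
      rw [Submodule.smul_le]
      intro r hr x hx
      exact Submodule.mem_colon.1 hr x hx
    -- key lemma: for s ∉ p, (N :ₘ s) = N
    have hkey : ∀ s : R, s ∉ p → ∀ x : M, s • x ∈ N → x ∈ N := by
      intro s hs
      by_contra hx
      push_neg at hx
      obtain ⟨x, hsx, hxN⟩ := hx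
      -- K = (N :ₘ s) strictly contains N, hence f.g.
      set f : M →ₗ[R] M := LinearMap.lsmul R M s with hf
      set K : Submodule R M := N.comap f with hK
      have hNK : N < K := by
        refine lt_of_le_of_ne (fun y hy => ?_) (fun h => hxN (h ▸ (hsx : x ∈ K)))
        exact Submodule.smul_mem N s hy
      have hKfg : K.FG := hmax K hNK
      -- N ⊔ sM strictly contains N, hence f.g.
      have hsnp : ∃ m : M, s • m ∉ N := by
        by_contra hall
        push_neg at hall
        exact hs (Submodule.mem_colon.2 fun m _ => hall m)
      obtain ⟨m, hm⟩ := hsnp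
      set P : Submodule R M := Submodule.map f ⊤ with hP
      have hNP : N < N ⊔ P := by
        refine lt_of_le_of_ne le_sup_left (fun h => hm ?_)
        rw [h]
        exact Submodule.mem_sup_right (Submodule.mem_map_of_mem trivial : s • m ∈ P)
      have hNPfg : (N ⊔ P).FG := hmax _ hNP
      obtain ⟨F, hFfg, hFN, hNle⟩ := exists_fg_sup_decomp N P hNPfg
      -- N ⊓ P ≤ map f K
      have hinf : N ⊓ P ≤ Submodule.map f K := by
        rintro y ⟨hyN, hyP⟩
        obtain ⟨z, -, rfl⟩ := hyP
        exact Submodule.mem_map_of_mem (hyN : f z ∈ N)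
      have hKN : Submodule.map f K ≤ N := by
        rintro _ ⟨z, hz, rfl⟩
        exact hz
      have : N = F ⊔ Submodule.map f K :=
        le_antisymm (hNle.trans (sup_le_sup_left hinf F)) (sup_le hFN hKN)
      exact hNfg (this ▸ hFfg.sup (hKfg.map f))
    -- p is prime
    have hpne : p ≠ ⊤ := by
      intro h
      apply hNne
      rw [eq_top_iff]
      intro x _
      simpa using Submodule.mem_colon.1 (h ▸ Submodule.mem_top : (1:R) ∈ p) x trivial
    have hprime : p.IsPrime := by
      refine ⟨hpne, ?_⟩
      intro a b hab
      by_contra h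
      push_neg at h
      obtain ⟨ha, hb⟩ := h
      apply hb
      refine Submodule.mem_colon.2 fun m _ => ?_
      refine hkey a ha (b • m) ?_
      have : a • b • m = (a * b) • m := (mul_smul a b m).symm
      rw [this]
      exact Submodule.mem_colon.1 hab m trivial
    have hann : Module.annihilator R M ≤ p := by
      intro r hr
      refine Submodule.mem_colon.2 fun m _ => ?_
      rw [Module.mem_annihilator.1 hr m]
      exact N.zero_mem
    -- apply the hypothesis
    obtain ⟨Np, hNpfg, hpMNp, hNpMp⟩ := hyp p hprime hann
    have hNpN : Np ≤ N := by
      intro x hx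
      obtain ⟨s, hs, hsx⟩ := hNpMp x hx
      exact hkey s hs x (hpM hsx)
    -- pick x₀ ∉ N
    obtain ⟨x₀, -, hx₀⟩ := SetLike.exists_of_lt hNne.lt_top
    set P : Submodule R M := Submodule.span R {x₀} with hP
    have hNP : N < N ⊔ P := by
      refine lt_of_le_of_ne le_sup_left (fun h => hx₀ ?_)
      rw [h]
      exact Submodule.mem_sup_right (Submodule.mem_span_singleton_self x₀)
    obtain ⟨F, hFfg, hFN, hNle⟩ := exists_fg_sup_decomp N P (hmax _ hNP)
    have hinf : N ⊓ P ≤ Np := by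
      rintro y ⟨hyN, hyP⟩
      obtain ⟨r, rfl⟩ := Submodule.mem_span_singleton.1 hyP
      have hrp : r ∈ p := by
        by_contra hr
        exact hx₀ (hkey r hr x₀ hyN)
      exact hpMNp (Submodule.smul_mem_smul hrp trivial)
    have : N = F ⊔ Np :=
      le_antisymm (hNle.trans (sup_le_sup_left hinf F)) (sup_le hFN hNpN)
    exact hNfg (this ▸ hFfg.sup hNpfg)
end

section
/- Let R be a commutative ring, S a multiplicative subset, and M an S-finite R-module. If for every prime ideal p of R disjoint from S the submodule p•M is S-finite, then M is S-Noetherian. -/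
open Pointwise

variable {R M : Type*} [CommRing R] [AddCommGroup M] [Module R M]

/-- If `A` is `S`-finite, `N ≤ A` and `s • A ⊆ N` for some `s ∈ S`, then `N` is `S`-finite. -/
lemma IsSFinite.of_smul_le {S : Submonoid R} {A N : Submodule R M} (hA : IsSFinite S A)
    (hNA : N ≤ A) {s : R} (hs : s ∈ S) (hsA : ∀ x ∈ A, s • x ∈ N) : IsSFinite S N := by
  obtain ⟨t, ht, G, hGfg, hGA, hGt⟩ := hA
  refine ⟨s * t, mul_mem hs ht, G.map (LinearMap.lsmul R M s), hGfg.map _, ?_, ?_⟩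
  · rintro _ ⟨g, hg, rfl⟩
    exact hsA g (hGA hg)
  · intro x hx
    refine ⟨t • x, hGt x (hNA hx), ?_⟩
    simp only [LinearMap.lsmul_apply, mul_smul]

/-- Key lemma: if both `N + a•M` and `(N :ₘ a)` are `S`-finite, then so is `N`. -/
lemma isSFinite_of_sup_comap {S : Submonoid R} {N : Submodule R M} (a : R)
    (hA : IsSFinite S (N ⊔ (⊤ : Submodule R M).map (LinearMap.lsmul R M a)))
    (hB : IsSFinite S (N.comap (LinearMap.lsmul R M a))) : IsSFinite S N := by
  classical
  obtain ⟨s₁, hs₁, F₁, hF₁fg, hF₁le, hF₁⟩ := hA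
  obtain ⟨s₂, hs₂, F₂, hF₂fg, hF₂le, hF₂⟩ := hB
  obtain ⟨T, hT⟩ := hF₁fg
  have hdec : ∀ z : M, ∃ yw : M × M, z ∈ T → (yw.1 ∈ N ∧ yw.1 + a • yw.2 = z) := by
    intro z
    by_cases hz : z ∈ T
    · have hzF : z ∈ F₁ := hT ▸ Submodule.subset_span hz
      rcases Submodule.mem_sup.1 (hF₁le hzF) with ⟨y, hy, w, hw, hyw⟩
      rcases Submodule.mem_map.1 hw with ⟨m, -, rfl⟩
      exact ⟨(y, m), fun _ => ⟨hy, by simpa using hyw⟩⟩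
    · exact ⟨(0, 0), fun hz' => absurd hz' hz⟩
  choose yw hyw using hdec
  refine ⟨s₂ * s₁, mul_mem hs₂ hs₁,
    Submodule.span R ((T.image fun z => s₂ • (yw z).1) : Set M) ⊔
      F₂.map (LinearMap.lsmul R M a), ?_, ?_, ?_⟩
  · exact (Submodule.fg_span (Finset.finite_toSet _)).sup (hF₂fg.map _)
  · refine sup_le (Submodule.span_le.2 ?_) ?_
    · intro w hw
      rcases Finset.mem_image.1 (by exact_mod_cast hw) with ⟨z, hz, rfl⟩
      exact Submodule.smul_mem _ _ ((hyw z hz).1)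
    · rintro _ ⟨m, hm, rfl⟩
      exact hF₂le hm
  · intro n hn
    have hnA : s₁ • n ∈ F₁ := hF₁ n (Submodule.mem_sup_left hn)
    rw [← hT] at hnA
    obtain ⟨c, -, hc⟩ := Submodule.mem_span_finset.1 hnA
    set w : M := ∑ z ∈ T, c z • (yw z).2 with hw
    have hsplit : (∑ z ∈ T, c z • (yw z).1) + a • w = s₁ • n := by
      rw [hw, Finset.smul_sum, ← Finset.sum_add_distrib, ← hc]
      refine Finset.sum_congr rfl fun z hz => ?_
      rw [smul_comm a (c z), ← smul_add, (hyw z hz).2]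
    have hyN : (∑ z ∈ T, c z • (yw z).1) ∈ N :=
      Submodule.sum_mem _ fun z hz => Submodule.smul_mem _ _ ((hyw z hz).1)
    have hawN : a • w ∈ N := by
      have : a • w = s₁ • n - ∑ z ∈ T, c z • (yw z).1 := by
        rw [← hsplit]; abel
      rw [this]
      exact Submodule.sub_mem _ (Submodule.smul_mem _ _ hn) hyN
    have hwB : w ∈ N.comap (LinearMap.lsmul R M a) := by simpa using hawN
    have hs₂w : s₂ • w ∈ F₂ := hF₂ w hwB
    have heq : (s₂ * s₁) • n =
        (∑ z ∈ T, c z • (s₂ • (yw z).1)) + a • (s₂ • w) := by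
      have : (∑ z ∈ T, c z • (s₂ • (yw z).1)) = s₂ • ∑ z ∈ T, c z • (yw z).1 := by
        rw [Finset.smul_sum]
        exact Finset.sum_congr rfl fun z hz => (smul_comm _ _ _)
      rw [this, smul_comm a s₂, ← smul_add, hsplit, mul_smul]
    rw [heq]
    refine Submodule.add_mem _ (Submodule.mem_sup_left ?_) (Submodule.mem_sup_right ?_)
    · refine Submodule.sum_mem _ fun z hz => Submodule.smul_mem _ _ ?_
      exact Submodule.subset_span (by exact_mod_cast Finset.mem_image_of_mem _ hz)
    · exact ⟨s₂ • w, hs₂w, rfl⟩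

theorem anderson_dumitrescu_cohen (S : Submonoid R)
    (hM : IsSFinite S (⊤ : Submodule R M))
    (h : ∀ p : Ideal R, p.IsPrime → (∀ s ∈ S, s ∉ p) →
      IsSFinite S (p • (⊤ : Submodule R M))) :
    ∀ N : Submodule R M, IsSFinite S N := by
  classical
  by_contra hcon
  push_neg at hcon
  obtain ⟨N₀, hN₀⟩ := hcon
  -- Zorn's lemma: a maximal non-S-finite submodule
  have hzorn : ∀ c ⊆ {N : Submodule R M | ¬ IsSFinite S N}, IsChain (· ≤ ·) c →
      ∀ y ∈ c, ∃ ub ∈ {N : Submodule R M | ¬ IsSFinite S N}, ∀ z ∈ c, z ≤ ub := by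
    intro c hcs hc y hy
    refine ⟨sSup c, ?_, fun z hz => le_sSup hz⟩
    intro hsfin
    obtain ⟨t, ht, F, hFfg, hFle, hF⟩ := hsfin
    obtain ⟨x, hxc, hFx⟩ :=
      (CompleteLattice.isCompactElement_iff_le_of_directed_sSup_le (α := Submodule R M) F).1
        ((Submodule.fg_iff_compact F).1 hFfg) c ⟨y, hy⟩ hc.directedOn hFle
    exact hcs hxc ⟨t, ht, F, hFfg, hFx, fun m hm => hF m ((le_sSup hxc) hm)⟩
  obtain ⟨N, -, hNmax⟩ :=
    zorn_le_nonempty₀ {N : Submodule R M | ¬ IsSFinite S N} hzorn N₀ hN₀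
  have hNs : ¬ IsSFinite S N := hNmax.1
  have hmax : ∀ L : Submodule R M, N < L → IsSFinite S L := by
    intro L hL
    by_contra hLf
    exact hL.not_ge (hNmax.2 hLf hL.le)
  -- the ideal p = (N : M)
  set p : Ideal R := N.colon ⊤ with hp
  have hmemp : ∀ r : R, r ∈ p ↔ ∀ m : M, r • m ∈ N := by
    intro r
    rw [hp, Submodule.mem_colon]
    exact ⟨fun H m => H m trivial, fun H m _ => H m⟩
  -- Step B: for a ∉ p, (N :ₘ a) = N
  have hstep : ∀ a : R, a ∉ p → N.comap (LinearMap.lsmul R M a) = N := by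
    intro a ha
    by_contra hne
    have hle : N ≤ N.comap (LinearMap.lsmul R M a) := fun m hm => by
      simpa using Submodule.smul_mem _ a hm
    have hltB : N < N.comap (LinearMap.lsmul R M a) := lt_of_le_of_ne hle (Ne.symm hne)
    have hltA : N < N ⊔ (⊤ : Submodule R M).map (LinearMap.lsmul R M a) := by
      rcases not_forall.1 ((hmemp a).not.1 ha) with ⟨m, hm⟩
      refine lt_of_le_of_ne le_sup_left fun hEq => hm ?_
      have : a • m ∈ N ⊔ (⊤ : Submodule R M).map (LinearMap.lsmul R M a) :=
        Submodule.mem_sup_right ⟨m, trivial, rfl⟩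
      rwa [← hEq] at this
    exact hNs (isSFinite_of_sup_comap a (hmax _ hltA) (hmax _ hltB))
  have hNne : N ≠ ⊤ := fun hEq => hNs (hEq ▸ hM)
  -- p is prime
  have hprime : p.IsPrime := by
    constructor
    · intro hEq
      apply hNne
      rw [Submodule.eq_top_iff']
      intro m
      simpa using (hmemp 1).1 (hEq ▸ Submodule.mem_top) m
    · intro a b hab
      by_contra hor
      push_neg at hor
      obtain ⟨ha, hb⟩ := hor
      rcases not_forall.1 ((hmemp b).not.1 hb) with ⟨m, hm⟩
      apply hm
      have habm : a • (b • m) ∈ N := by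
        rw [← mul_smul]
        exact (hmemp (a * b)).1 hab m
      have : b • m ∈ N.comap (LinearMap.lsmul R M a) := by
        simp only [Submodule.mem_comap, LinearMap.lsmul_apply]
        exact habm
      rwa [hstep a ha] at this
  -- p is disjoint from S
  have hdisj : ∀ s ∈ S, s ∉ p := by
    intro s hs hsp
    exact hNs (hM.of_smul_le le_top hs fun m _ => (hmemp s).1 hsp m)
  -- pM is S-finite and pM ≤ N
  obtain ⟨u, hu, Fp, hFpfg, hFple, hFp⟩ := h p hprime hdisj
  have hpMN : p • (⊤ : Submodule R M) ≤ N :=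
    Submodule.smul_le.2 fun r hr m _ => (hmemp r).1 hr m
  -- pick x ∉ N
  obtain ⟨x, hx⟩ : ∃ x : M, x ∉ N := by
    by_contra hall
    push_neg at hall
    exact hNne (Submodule.eq_top_iff'.2 hall)
  have hltL : N < N ⊔ Submodule.span R {x} :=
    lt_of_le_of_ne le_sup_left fun hEq => hx <| by
      rw [hEq]; exact Submodule.mem_sup_right (Submodule.mem_span_singleton_self x)
  obtain ⟨s₁, hs₁, F₁, hF₁fg, hF₁le, hF₁⟩ := hmax _ hltL
  obtain ⟨T, hT⟩ := hF₁fg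
  have hdec : ∀ z : M, ∃ yr : M × R, z ∈ T → (yr.1 ∈ N ∧ yr.1 + yr.2 • x = z) := by
    intro z
    by_cases hz : z ∈ T
    · have hzF : z ∈ F₁ := hT ▸ Submodule.subset_span hz
      rcases Submodule.mem_sup.1 (hF₁le hzF) with ⟨y, hy, w, hw, hyw⟩
      rcases Submodule.mem_span_singleton.1 hw with ⟨r, rfl⟩
      exact ⟨(y, r), fun _ => ⟨hy, hyw⟩⟩
    · exact ⟨(0, 0), fun hz' => absurd hz' hz⟩
  choose yr hyr using hdec
  apply hNs
  refine ⟨u * s₁, mul_mem hu hs₁,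
    Submodule.span R ((T.image fun z => u • (yr z).1) : Set M) ⊔ Fp, ?_, ?_, ?_⟩
  · exact (Submodule.fg_span (Finset.finite_toSet _)).sup hFpfg
  · refine sup_le (Submodule.span_le.2 ?_) (hFple.trans hpMN)
    intro w hw
    rcases Finset.mem_image.1 (by exact_mod_cast hw) with ⟨z, hz, rfl⟩
    exact Submodule.smul_mem _ _ ((hyr z hz).1)
  · intro n hn
    have hnL : s₁ • n ∈ F₁ := hF₁ n (Submodule.mem_sup_left hn)
    rw [← hT] at hnL
    obtain ⟨c, -, hc⟩ := Submodule.mem_span_finset.1 hnL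
    set j : R := ∑ z ∈ T, c z * (yr z).2 with hj
    have hsplit : (∑ z ∈ T, c z • (yr z).1) + j • x = s₁ • n := by
      rw [hj, Finset.sum_smul, ← Finset.sum_add_distrib, ← hc]
      refine Finset.sum_congr rfl fun z hz => ?_
      rw [mul_smul, ← smul_add, (hyr z hz).2]
    have hyN : (∑ z ∈ T, c z • (yr z).1) ∈ N :=
      Submodule.sum_mem _ fun z hz => Submodule.smul_mem _ _ ((hyr z hz).1)
    have hjxN : j • x ∈ N := by
      have : j • x = s₁ • n - ∑ z ∈ T, c z • (yr z).1 := by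
        rw [← hsplit]; abel
      rw [this]
      exact Submodule.sub_mem _ (Submodule.smul_mem _ _ hn) hyN
    have hjp : j ∈ p := by
      by_contra hjp
      have : x ∈ N.comap (LinearMap.lsmul R M j) := by simpa using hjxN
      rw [hstep j hjp] at this
      exact hx this
    have hjxpM : j • x ∈ p • (⊤ : Submodule R M) :=
      Submodule.smul_mem_smul hjp Submodule.mem_top
    have hujx : u • (j • x) ∈ Fp := hFp _ hjxpM
    have heq : (u * s₁) • n = (∑ z ∈ T, c z • (u • (yr z).1)) + u • (j • x) := by
      have : (∑ z ∈ T, c z • (u • (yr z).1)) = u • ∑ z ∈ T, c z • (yr z).1 := by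
        rw [Finset.smul_sum]
        exact Finset.sum_congr rfl fun z hz => (smul_comm _ _ _)
      rw [this, ← smul_add, hsplit, mul_smul]
    rw [heq]
    refine Submodule.add_mem _ (Submodule.mem_sup_left ?_) (Submodule.mem_sup_right hujx)
    refine Submodule.sum_mem _ fun z hz => Submodule.smul_mem _ _ ?_
    exact Submodule.subset_span (by exact_mod_cast Finset.mem_image_of_mem _ hz)
end

section
/- Let R be a commutative ring and M a finitely generated R-module. Then M is Noetherian if and only if for every prime ideal p of R containing Ann(M), the submodule M(p) = {x ∈ M | ∃ s ∉ p, s•x ∈ p•M} is finitely generated. -/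
open Pointwise

variable {R M : Type*} [CommRing R] [AddCommGroup M] [Module R M]

private lemma exists_maximal_nonfg (h : ¬ IsNoetherian R M) :
    ∃ N : Submodule R M, ¬ N.FG ∧ ∀ N' : Submodule R M, N < N' → N'.FG := by
  rw [isNoetherian_def] at h
  push_neg at h
  obtain ⟨N₀, hN₀⟩ := h
  have hchain : ∀ c ⊆ {N : Submodule R M | ¬ N.FG}, IsChain (· ≤ ·) c → ∀ y ∈ c,
      ∃ ub ∈ {N : Submodule R M | ¬ N.FG}, ∀ z ∈ c, z ≤ ub := by
    intro c hcs hchain y hy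
    refine ⟨sSup c, ?_, fun z hz => le_sSup hz⟩
    intro hfg
    obtain ⟨T, hT⟩ := hfg
    have hdir : DirectedOn (· ≤ ·) c := hchain.directedOn
    have hmem : ∀ g ∈ (T : Set M), ∃ P ∈ c, g ∈ P := by
      intro g hg
      exact (Submodule.mem_sSup_of_directed ⟨y, hy⟩ hdir).1 (hT ▸ Submodule.subset_span hg)
    have hsub : (T : Set M) ⊆ ⋃ P ∈ c, (P : Set M) := by
      intro g hg
      obtain ⟨P, hPc, hgP⟩ := hmem g hg
      exact Set.mem_biUnion hPc hgP
    have hdir2 : DirectedOn (fun i j : Submodule R M => (i : Set M) ⊆ (j : Set M)) c :=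
      fun a ha b hb => by
        obtain ⟨d, hd, had, hbd⟩ := hdir a ha b hb
        exact ⟨d, hd, had, hbd⟩
    obtain ⟨z, hzc, hTz⟩ :=
      DirectedOn.exists_mem_subset_of_finset_subset_biUnion ⟨y, hy⟩ hdir2 hsub
    have hle : sSup c ≤ z := hT ▸ Submodule.span_le.2 hTz
    have hzeq : z = sSup c := le_antisymm (le_sSup hzc) hle
    exact (hcs hzc) ⟨T, by rw [hT, hzeq]⟩
  obtain ⟨N, -, hN⟩ := zorn_le_nonempty₀ {N : Submodule R M | ¬ N.FG} hchain N₀ hN₀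
  exact ⟨N, hN.prop, fun N' hN' => not_not.1 (hN.not_prop_of_gt hN')⟩

private lemma fg_of_lt_comap {N : Submodule R M}
    (hmax : ∀ N' : Submodule R M, N < N' → N'.FG) (t : R)
    (ht : ∃ m : M, t • m ∉ N)
    (hK : N < N.comap (LinearMap.lsmul R M t)) : N.FG := by
  obtain ⟨m, hm⟩ := ht
  have hKfg : (N.comap (LinearMap.lsmul R M t)).FG := hmax _ hK
  set tM : Submodule R M := Submodule.map (LinearMap.lsmul R M t) ⊤ with htM
  have hN' : N < N ⊔ tM := by
    refine lt_of_le_of_ne le_sup_left fun h => ?_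
    have : t • m ∈ N ⊔ tM := Submodule.mem_sup_right (Submodule.mem_map.2 ⟨m, trivial, rfl⟩)
    exact hm (h ▸ this)
  obtain ⟨T, hT⟩ := hmax _ hN'
  have hdec : ∀ g ∈ (T : Set M), ∃ n ∈ N, ∃ y : M, g = n + t • y := by
    intro g hg
    have : g ∈ N ⊔ tM := hT ▸ Submodule.subset_span hg
    rw [Submodule.mem_sup] at this
    obtain ⟨n, hn, z, hz, rfl⟩ := this
    obtain ⟨y, -, rfl⟩ := Submodule.mem_map.1 hz
    exact ⟨n, hn, y, rfl⟩
  choose! nf hnf yf hyf using hdec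
  set F := Submodule.span R (nf '' T) with hF
  have hFfg : F.FG := Submodule.fg_span (T.finite_toSet.image nf)
  have hFN : F ≤ N := Submodule.span_le.2 (by rintro _ ⟨g, hg, rfl⟩; exact hnf g hg)
  have key : N = F ⊔ Submodule.map (LinearMap.lsmul R M t) (N.comap (LinearMap.lsmul R M t)) := by
    refine le_antisymm ?_ (sup_le hFN (Submodule.map_le_iff_le_comap.2 le_rfl))
    intro x hx
    have hx' : x ∈ Submodule.span R (T : Set M) := by
      rw [hT]; exact Submodule.mem_sup_left hx
    have hx'' : x ∈ F ⊔ tM := by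
      refine Submodule.span_le.2 ?_ hx'
      intro g hg
      rw [hyf g hg]
      exact Submodule.add_mem _ (Submodule.mem_sup_left (Submodule.subset_span ⟨g, hg, rfl⟩))
        (Submodule.mem_sup_right (Submodule.mem_map.2 ⟨yf g, trivial, rfl⟩))
    rw [Submodule.mem_sup] at hx''
    obtain ⟨f, hf, z, hz, rfl⟩ := hx''
    obtain ⟨y, -, rfl⟩ := Submodule.mem_map.1 hz
    have hyN : y ∈ N.comap (LinearMap.lsmul R M t) := by
      have h1 : (LinearMap.lsmul R M t) y = (f + (LinearMap.lsmul R M t) y) - f := by abel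
      refine Submodule.mem_comap.2 ?_
      show t • y ∈ N
      have : (LinearMap.lsmul R M t) y ∈ N := h1 ▸ N.sub_mem hx (hFN hf)
      simpa using this
    exact Submodule.add_mem _ (Submodule.mem_sup_left hf)
      (Submodule.mem_sup_right (Submodule.mem_map.2 ⟨y, hyN, rfl⟩))
  rw [key]
  exact hFfg.sup (hKfg.map _)

theorem smith_cohen (hM : Module.Finite R M) :
    IsNoetherian R M ↔
      ∀ p : Ideal R, p.IsPrime → Module.annihilator R M ≤ p →
        (⨆ x ∈ {x : M | ∃ s ∉ p, s • x ∈ p • (⊤ : Submodule R M)},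
          (R ∙ x) : Submodule R M).FG := by
  constructor
  · intro h p _ _
    exact IsNoetherian.noetherian _
  · intro H
    by_contra hnoeth
    obtain ⟨N, hNfg, hmax⟩ := exists_maximal_nonfg hnoeth
    have htopfg : (⊤ : Submodule R M).FG := Module.finite_def.1 hM
    have hNtop : N ≠ ⊤ := fun h => hNfg (h ▸ htopfg)
    set p : Ideal R := N.colon ⊤ with hpdef
    have hnotp : ∀ t : R, t ∉ p → ∃ m : M, t • m ∉ N := by
      intro t ht
      by_contra h
      push_neg at h
      exact ht (Submodule.mem_colon.2 fun m _ => h m)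
    have hpM : p • (⊤ : Submodule R M) ≤ N :=
      Submodule.smul_le.2 fun r hr m hm => Submodule.mem_colon.1 hr m hm
    have hprime : p.IsPrime := by
      constructor
      · intro h
        refine hNtop (eq_top_iff.2 fun m _ => ?_)
        have h1 : (1 : R) ∈ p := h ▸ Submodule.mem_top
        simpa using Submodule.mem_colon.1 h1 m (by trivial)
      · intro a b hab
        by_contra h
        push_neg at h
        obtain ⟨ha, hb⟩ := h
        refine hNfg (fg_of_lt_comap hmax a (hnotp a ha) ?_)
        obtain ⟨m, hbm⟩ := hnotp b hb
        refine lt_of_le_of_ne (fun x hx => Submodule.mem_comap.2 (N.smul_mem a hx)) fun heq => ?_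
        have : b • m ∈ N.comap (LinearMap.lsmul R M a) := by
          refine Submodule.mem_comap.2 ?_
          show a • b • m ∈ N
          rw [smul_smul]
          exact Submodule.mem_colon.1 hab m (by trivial)
        exact hbm (heq ▸ this)
    have hann : Module.annihilator R M ≤ p := by
      intro r hr
      refine Submodule.mem_colon.2 fun m _ => ?_
      rw [Module.mem_annihilator.1 hr m]
      exact N.zero_mem
    by_cases hsat : ∃ t, t ∉ p ∧ ¬ N.comap (LinearMap.lsmul R M t) ≤ N
    · obtain ⟨t, htp, hKt⟩ := hsat
      refine hNfg (fg_of_lt_comap hmax t (hnotp t htp) ?_)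
      exact lt_of_le_not_ge (fun x hx => Submodule.mem_comap.2 (N.smul_mem t hx)) hKt
    · push_neg at hsat
      set W : Submodule R M :=
        ⨆ x ∈ {x : M | ∃ s ∉ p, s • x ∈ p • (⊤ : Submodule R M)}, (R ∙ x) with hWdef
      have hWfg : W.FG := H p hprime hann
      have hWN : W ≤ N := by
        refine iSup₂_le fun x hx => ?_
        obtain ⟨s, hs, hsx⟩ := hx
        rw [Submodule.span_singleton_le_iff_mem]
        exact hsat s hs (Submodule.mem_comap.2 (hpM hsx))
      have hpMW : p • (⊤ : Submodule R M) ≤ W := by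
        intro x hx
        have hxset : x ∈ {x : M | ∃ s ∉ p, s • x ∈ p • (⊤ : Submodule R M)} :=
          ⟨1, fun h1 => hprime.ne_top ((Ideal.eq_top_iff_one p).2 h1), by simpa using hx⟩
        exact le_iSup₂ (f := fun x _ => (R ∙ x : Submodule R M)) x hxset
          (Submodule.mem_span_singleton_self x)
      obtain ⟨m, hm⟩ : ∃ m : M, m ∉ N := by
        by_contra h
        push_neg at h
        exact hNtop (eq_top_iff.2 fun x _ => h x)
      have hcolm : ∀ r : R, r • m ∈ N → r ∈ p := by
        intro r hr
        by_contra hrp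
        exact hm (hsat r hrp (Submodule.mem_comap.2 hr))
      have hN' : N < N ⊔ (R ∙ m) := by
        refine lt_of_le_of_ne le_sup_left fun h => ?_
        exact hm (h ▸ Submodule.mem_sup_right (Submodule.mem_span_singleton_self m))
      obtain ⟨T, hT⟩ := hmax _ hN'
      have hdec : ∀ g ∈ (T : Set M), ∃ n ∈ N, ∃ r : R, g = n + r • m := by
        intro g hg
        have : g ∈ N ⊔ (R ∙ m) := hT ▸ Submodule.subset_span hg
        rw [Submodule.mem_sup] at this
        obtain ⟨n, hn, z, hz, rfl⟩ := this
        obtain ⟨r, rfl⟩ := Submodule.mem_span_singleton.1 hz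
        exact ⟨n, hn, r, rfl⟩
      choose! nf hnf rf hrf using hdec
      set F := Submodule.span R (nf '' T) with hFdef
      have hFfg : F.FG := Submodule.fg_span (T.finite_toSet.image nf)
      have hFN : F ≤ N := Submodule.span_le.2 (by rintro _ ⟨g, hg, rfl⟩; exact hnf g hg)
      have hNle : N ≤ F ⊔ p • (⊤ : Submodule R M) := by
        intro x hx
        have hx' : x ∈ Submodule.span R (T : Set M) := by
          rw [hT]; exact Submodule.mem_sup_left hx
        have hx'' : x ∈ F ⊔ (R ∙ m) := by
          refine Submodule.span_le.2 ?_ hx'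
          intro g hg
          rw [hrf g hg]
          exact Submodule.add_mem _ (Submodule.mem_sup_left (Submodule.subset_span ⟨g, hg, rfl⟩))
            (Submodule.mem_sup_right ((R ∙ m).smul_mem _ (Submodule.mem_span_singleton_self m)))
        rw [Submodule.mem_sup] at hx''
        obtain ⟨f, hf, z, hz, rfl⟩ := hx''
        obtain ⟨r, rfl⟩ := Submodule.mem_span_singleton.1 hz
        have hrm : r • m ∈ N := by
          have h1 : r • m = (f + r • m) - f := by abel
          exact h1 ▸ N.sub_mem hx (hFN hf)
        exact Submodule.add_mem _ (Submodule.mem_sup_left hf)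
          (Submodule.mem_sup_right (Submodule.smul_mem_smul (hcolm r hrm) Submodule.mem_top))
      have hNeq : N = F ⊔ W := by
        refine le_antisymm (hNle.trans (sup_le le_sup_left (hpMW.trans le_sup_right)))
          (sup_le hFN hWN)
      exact hNfg (hNeq ▸ hFfg.sup hWfg)
end

section
/- Let R be a commutative ring and M a finitely generated R-module. If for every prime ideal p of R the submodule p•M is finitely generated, then M is Noetherian. -/
open Pointwise

variable {R M : Type*} [CommRing R] [AddCommGroup M] [Module R M]

/-- If `N ⊔ L` is finitely generated, then `N = P ⊔ (L ⊓ N)` for some f.g. `P ≤ N`. -/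
lemma exists_fg_sup_inf (N L : Submodule R M) (hfg : (N ⊔ L).FG) :
    ∃ P : Submodule R M, P.FG ∧ P ≤ N ∧ N = P ⊔ (L ⊓ N) := by
  obtain ⟨T, hT⟩ := hfg
  have hmem : ∀ x : M, ∃ nl : M × M, x ∈ N ⊔ L → nl.1 ∈ N ∧ nl.2 ∈ L ∧ nl.1 + nl.2 = x := by
    intro x
    by_cases hx : x ∈ N ⊔ L
    · obtain ⟨n, hn, l, hl, hsum⟩ := Submodule.mem_sup.mp hx
      exact ⟨(n, l), fun _ => ⟨hn, hl, hsum⟩⟩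
    · exact ⟨(0, 0), fun hx' => absurd hx' hx⟩
  choose f hf using hmem
  have hTsub : ∀ x ∈ (T : Set M), x ∈ N ⊔ L := by
    intro x hx; rw [← hT]; exact Submodule.subset_span hx
  have hPN : Submodule.span R ((fun x => (f x).1) '' T) ≤ N := by
    rw [Submodule.span_le]; rintro y ⟨x, hx, rfl⟩; exact (hf x (hTsub x hx)).1
  refine ⟨Submodule.span R ((fun x => (f x).1) '' T), ?_, hPN, ?_⟩
  · exact Submodule.fg_span (T.finite_toSet.image _)
  · apply le_antisymm
    · intro x hxN
      have hx' : x ∈ Submodule.span R ((fun x => (f x).1) '' T) ⊔ L := by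
        have hle : N ⊔ L ≤ Submodule.span R ((fun x => (f x).1) '' T) ⊔ L := by
          rw [← hT, Submodule.span_le]
          intro t ht
          obtain ⟨h1, h2, h3⟩ := hf t (hTsub t ht)
          rw [← h3]
          exact Submodule.add_mem _
            (Submodule.mem_sup_left (Submodule.subset_span ⟨t, ht, rfl⟩))
            (Submodule.mem_sup_right h2)
        exact hle (Submodule.mem_sup_left hxN)
      obtain ⟨q, hq, l, hl, hsum⟩ := Submodule.mem_sup.mp hx'
      have hlN : l ∈ N := by
        have hlx : l = x - q := by rw [← hsum]; abel
        rw [hlx]; exact Submodule.sub_mem _ hxN (hPN hq)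
      exact Submodule.mem_sup.mpr ⟨q, hq, l, ⟨hl, hlN⟩, hsum⟩
    · exact sup_le hPN inf_le_right

theorem noetherian_of_pM_fg (hM : Module.Finite R M)
    (h : ∀ p : Ideal R, p.IsPrime → (p • (⊤ : Submodule R M)).FG) :
    IsNoetherian R M := by
  rw [isNoetherian_def]
  by_contra hc
  push_neg at hc
  obtain ⟨N₀, hN₀⟩ := hc
  have htop : (⊤ : Submodule R M).FG := Module.finite_def.mp hM
  -- Zorn's lemma: a maximal non-finitely-generated submodule exists
  obtain ⟨N, hNmem, hNmax⟩ :
      ∃ N : Submodule R M, (¬ N.FG) ∧ ∀ L : Submodule R M, ¬ L.FG → N ≤ L → L ≤ N := by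
    obtain ⟨N, _, hmax⟩ := zorn_le_nonempty₀ {N : Submodule R M | ¬ N.FG}
      (fun c hcs hchain y hy => by
        refine ⟨sSup c, ?_, fun z hz => le_sSup hz⟩
        intro hfg
        have hcompact := (Submodule.fg_iff_compact _).mp hfg
        rw [CompleteLattice.isCompactElement_iff_le_of_directed_sSup_le] at hcompact
        obtain ⟨z, hzc, hze⟩ := hcompact c ⟨y, hy⟩ hchain.directedOn le_rfl
        exact hcs hzc (le_antisymm hze (le_sSup hzc) ▸ hfg)) N₀ hN₀
    exact ⟨N, hmax.1, fun L hL hNL => hmax.2 hL hNL⟩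
  -- maximality: any submodule strictly above N is f.g.
  have hfg_of_gt : ∀ L : Submodule R M, N < L → L.FG := by
    intro L hL
    by_contra hLfg
    exact hL.ne (le_antisymm hL.le (hNmax L hLfg hL.le))
  set p : Ideal R := N.colon ⊤ with hp_def
  have hpM_le : p • (⊤ : Submodule R M) ≤ N :=
    Submodule.smul_le.mpr fun r hr n _ => Submodule.mem_colon.mp hr n trivial
  -- Key: for a ∉ p, the colon submodule (N :ₘ a) is not f.g.
  have hH1 : ∀ a : R, a ∉ p → ¬ (N.comap (LinearMap.lsmul R M a)).FG := by
    intro a ha hfg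
    have haM : ¬ (⊤ : Submodule R M).map (LinearMap.lsmul R M a) ≤ N := by
      intro hle
      exact ha (Submodule.mem_colon.mpr fun m _ => hle ⟨m, trivial, rfl⟩)
    have hlt : N < N ⊔ (⊤ : Submodule R M).map (LinearMap.lsmul R M a) := by
      refine lt_of_le_of_ne le_sup_left fun heq => haM ?_
      exact le_sup_right.trans heq.ge
    obtain ⟨P, hPfg, hPN, hNeq⟩ := exists_fg_sup_inf N _ (hfg_of_gt _ hlt)
    have hinf : (⊤ : Submodule R M).map (LinearMap.lsmul R M a) ⊓ N
        = (N.comap (LinearMap.lsmul R M a)).map (LinearMap.lsmul R M a) := by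
      rw [Submodule.map_comap_eq, Submodule.map_top]
    apply hNmem
    rw [hNeq, hinf]
    exact hPfg.sup (hfg.map _)
  -- (N :ₘ s) = N for s ∉ p
  have hsat : ∀ s : R, s ∉ p → ∀ x : M, s • x ∈ N → x ∈ N := by
    intro s hs x hx
    have hle : N ≤ N.comap (LinearMap.lsmul R M s) :=
      fun z hz => by simpa using N.smul_mem s hz
    by_contra hxN
    have hlt : N < N.comap (LinearMap.lsmul R M s) :=
      lt_of_le_of_ne hle (fun heq => hxN (heq ▸ (by simpa using hx)))
    exact hH1 s hs (hfg_of_gt _ hlt)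
  -- p is prime
  have hp_ne_top : p ≠ ⊤ := by
    intro hptop
    apply hNmem
    have : N = ⊤ := by
      rw [Submodule.eq_top_iff']
      intro x
      have h1 : (1 : R) ∈ p := hptop ▸ Submodule.mem_top
      simpa using Submodule.mem_colon.mp h1 x trivial
    rw [this]; exact htop
  have hp_prime : p.IsPrime := by
    refine ⟨hp_ne_top, ?_⟩
    intro a b hab
    by_contra hcon
    push_neg at hcon
    obtain ⟨ha, hb⟩ := hcon
    apply hH1 a ha
    apply hfg_of_gt
    have hle : N ≤ N.comap (LinearMap.lsmul R M a) :=
      fun z hz => by simpa using N.smul_mem a hz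
    refine lt_of_le_of_ne hle fun heq => hb ?_
    refine Submodule.mem_colon.mpr fun m _ => ?_
    have : b • m ∈ N.comap (LinearMap.lsmul R M a) := by
      simp only [Submodule.mem_comap, LinearMap.lsmul_apply]
      rw [smul_smul]
      exact Submodule.mem_colon.mp hab m trivial
    rw [← heq] at this
    exact this
  -- pick y ∉ N
  have hN_ne_top : N ≠ ⊤ := fun heq => hNmem (heq ▸ htop)
  obtain ⟨y, hy⟩ : ∃ y : M, y ∉ N := by
    by_contra hall
    push_neg at hall
    exact hN_ne_top (Submodule.eq_top_iff'.mpr hall)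
  have hlt : N < N ⊔ Submodule.span R {y} := by
    refine lt_of_le_of_ne le_sup_left fun heq => hy ?_
    exact heq.ge (Submodule.mem_sup_right (Submodule.mem_span_singleton_self y))
  obtain ⟨P, hPfg, hPN, hNeq⟩ := exists_fg_sup_inf N _ (hfg_of_gt _ hlt)
  have hinf_le : Submodule.span R {y} ⊓ N ≤ p • (⊤ : Submodule R M) := by
    rintro x ⟨hxL, hxN⟩
    obtain ⟨c, rfl⟩ := Submodule.mem_span_singleton.mp hxL
    have hc : c ∈ p := by
      by_contra hc
      exact hy (hsat c hc y hxN)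
    exact Submodule.smul_mem_smul hc trivial
  apply hNmem
  have hNeq2 : N = P ⊔ p • (⊤ : Submodule R M) := by
    apply le_antisymm
    · rw [hNeq]
      exact sup_le le_sup_left ((le_trans hinf_le le_sup_right))
    · exact sup_le hPN hpM_le
  rw [hNeq2]
  exact hPfg.sup (h p hp_prime)
end

section
/- Let R be a commutative ring, S a multiplicative subset of R, M an R-module, N a submodule of M that is not S-finite, and a ∈ R. Suppose N + a•M is S-finite and L = {x ∈ M | a•x ∈ N} is S-finite. Then N itself is S-finite; equivalently, if N is not S-finite then N + a•M is not S-finite or L is not S-finite. -/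
open Pointwise

variable {R M : Type*} [CommRing R] [AddCommGroup M] [Module R M]

theorem sFinite_of_sum_and_colon (S : Submonoid R) (N : Submodule R M) (a : R)
    (h1 : IsSFinite S (N ⊔ a • (⊤ : Submodule R M)))
    (h2 : IsSFinite S (N.comap (LinearMap.lsmul R M a))) :
    IsSFinite S N := by
  obtain ⟨s1, hs1, F1, hF1fg, hF1le, hF1⟩ := h1
  obtain ⟨s2, hs2, F2, hF2fg, hF2le, hF2⟩ := h2
  obtain ⟨T1, hT1⟩ := hF1fg
  -- decompose each generator of F1 as p + a • m with p ∈ N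
  have hdec : ∀ t ∈ T1, ∃ p, p ∈ N ∧ ∃ m : M, p + a • m = t := by
    intro t ht
    have htF1 : (t : M) ∈ F1 := hT1 ▸ Submodule.subset_span ht
    have := hF1le htF1
    rw [Submodule.mem_sup] at this
    obtain ⟨y, hy, z, hz, hyz⟩ := this
    obtain ⟨m, -, hm⟩ := Set.mem_smul_set.mp hz
    exact ⟨y, hy, m, by rw [hm, hyz]⟩
  choose p hp m hm using hdec
  set P : Submodule R M := Submodule.span R (Set.range fun t : ↥T1 => p t t.2) with hP
  have hPfg : P.FG := Submodule.fg_span (Set.finite_range _)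
  have hPle : P ≤ N := by
    rw [hP, Submodule.span_le]
    rintro x ⟨t, rfl⟩
    exact hp t t.2
  have hF1le' : F1 ≤ P ⊔ a • (⊤ : Submodule R M) := by
    rw [← hT1, Submodule.span_le]
    intro t ht
    have : (t : M) = p t ht + a • m t ht := (hm t ht).symm
    rw [this]
    refine Submodule.add_mem_sup ?_ ?_
    · exact Submodule.subset_span ⟨⟨t, ht⟩, rfl⟩
    · exact Submodule.smul_mem_pointwise_smul _ _ _ Submodule.mem_top
  refine ⟨s2 * s1, S.mul_mem hs2 hs1, P ⊔ F2.map (LinearMap.lsmul R M a),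
    hPfg.sup (hF2fg.map _), sup_le hPle ?_, ?_⟩
  · rw [Submodule.map_le_iff_le_comap]
    exact hF2le
  · intro x hx
    have h1x : s1 • x ∈ P ⊔ a • (⊤ : Submodule R M) := hF1le' (hF1 x (Submodule.mem_sup_left hx))
    rw [Submodule.mem_sup] at h1x
    obtain ⟨q, hq, z, hz, hsum⟩ := h1x
    obtain ⟨m', -, hm'⟩ := Set.mem_smul_set.mp hz
    have ham' : a • m' ∈ N := by
      have : a • m' = s1 • x - q := by rw [hm']; rw [← hsum]; abel
      rw [this]
      exact N.sub_mem (N.smul_mem _ hx) (hPle hq)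
    have hm'L : m' ∈ N.comap (LinearMap.lsmul R M a) := by simpa using ham'
    have h2m : s2 • m' ∈ F2 := hF2 _ hm'L
    have : (s2 * s1) • x = s2 • q + a • (s2 • m') := by
      rw [mul_smul, ← hsum, smul_add, ← hm', smul_comm s2 a]
    rw [this]
    refine Submodule.add_mem_sup (P.smul_mem _ hq) ?_
    exact ⟨s2 • m', h2m, rfl⟩
end
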